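/- Bounded rotation speed: for every n with 1 ≤ n ≤ N and every E ∈ ℝ with |E − ε_n| ≤ W + 1, the Prüfer angle derivatives satisfy the recursive inequality φ'_{n+1}(E) ≤ 1 + φ'_n(E)/η(W). -/

import Mathlib

/-- The quadratic form `q(x, φ) = 1 − 2x sin φ cos φ + x² sin² φ`. -/
noncomputable def qform (x φ : ℝ) : ℝ :=
  1 - 2 * x * Real.sin φ * Real.cos φ + x ^ 2 * Real.sin φ ^ 2

/-- `η(W) = min { q(x, φ) : |x| ≤ W + 1, 0 ≤ φ ≤ π }`. -/
noncomputable def eta (W : ℝ) : ℝ :=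
  sInf ((fun p : ℝ × ℝ => qform p.1 p.2) '' (Set.Icc (-(W + 1)) (W + 1) ×ˢ Set.Icc 0 Real.pi))

/-- One step of the Prüfer angle recursion: if `φ = kπ` (i.e. `sin φ = 0`) the next
angle is `(k − 1/2)π = φ − π/2`; otherwise, with `k = ⌊φ/π⌋` the unique integer with
`kπ < φ < (k+1)π`, the next angle is `arctan(E − e − cot φ) + kπ`. -/
noncomputable def pruferStep (e E φ : ℝ) : ℝ :=
  if Real.sin φ = 0 then φ - Real.pi / 2
  else Real.arctan (E - e - Real.cos φ / Real.sin φ) + Real.pi * ((⌊φ / Real.pi⌋ : ℤ) : ℝ)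

/-- The Prüfer angles: `φ_1(E) = π/2` and `φ_{n+1}(E) = pruferStep (ε n) E (φ_n(E))`
for `n ≥ 1`.  (The value at index `0` is junk, set to `π/2`.) -/
noncomputable def prufer (ε : ℕ → ℝ) (E : ℝ) : ℕ → ℝ
  | 0 => Real.pi / 2
  | 1 => Real.pi / 2
  | n + 2 => pruferStep (ε (n + 1)) E (prufer ε E (n + 1))

/-!
Write `t = E - e` and `u = φ - kπ` with `|u| < π`. Then the Prüfer step from `φ` equals
`kπ - π/2 + arg w` with `w = (cos u - t sin u) + i sin u`, a point of the slit plane with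
`|w|² = q(t, φ)`. So the step is smooth in `(E, φ)`, and differentiating `arg w = Im (log w)` gives
`φ'_{n+1} = (φ'_n + sin² φ_n) / q(E - ε_n, φ_n)`. Since `sin² φ ≤ q`, `η(W) ≤ q` (as `q` is
`π`-periodic in `φ`) and `φ'_n ≥ 0` (by induction), this is at most `1 + φ'_n / η(W)`.
-/

open Real Topology
open Complex (arg I slitPlane normSq)

lemma HasDerivAt.arg {g : ℝ → ℂ} {g' : ℂ} {x : ℝ} (h : HasDerivAt g g' x) (hx : g x ∈ slitPlane) :
    HasDerivAt (fun y => arg (g y)) (g' / g x).im x := by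
  simpa [Function.comp_def, Complex.log_im] using
    Complex.imCLM.hasFDerivAt.comp_hasDerivAt x (h.clog_real hx)

lemma arg_neg_add_I (x : ℝ) : arg (-x + I) = arctan x + π / 2 := by
  have hr : 0 < √(1 + x ^ 2) := by positivity
  have hθ : arctan x + π / 2 ∈ Set.Ioc (-π) π := by
    constructor <;> linarith [neg_pi_div_two_lt_arctan x, arctan_lt_pi_div_two x, pi_pos]
  convert Complex.arg_mul_cos_add_sin_mul_I hr hθ using 2
  rw [← Complex.ofReal_cos, ← Complex.ofReal_sin, cos_add_pi_div_two, sin_add_pi_div_two,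
    sin_arctan, cos_arctan]
  apply Complex.ext <;> simp <;> field_simp

lemma sin_sq_periodic : Function.Periodic (fun x => sin x ^ 2) π := by
  intro x; simp [sin_add_pi]

lemma qform_eq (x φ : ℝ) : qform x φ = (cos φ - x * sin φ) ^ 2 + sin φ ^ 2 := by
  rw [qform]; linear_combination -sin_sq_add_cos_sq φ

lemma qform_pos (x φ : ℝ) : 0 < qform x φ := by
  rw [qform_eq]
  rcases eq_or_ne (sin φ) 0 with h | h
  · have := sin_sq_add_cos_sq φ
    simp only [h, mul_zero, sub_zero] at this ⊢
    linarith
  · positivity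

lemma sin_sq_le_qform (x φ : ℝ) : sin φ ^ 2 ≤ qform x φ := by
  rw [qform_eq]; nlinarith

lemma qform_periodic (x : ℝ) : Function.Periodic (qform x) π := by
  intro φ; simp [qform, sin_add_pi, cos_add_pi]

lemma bddBelow_image_qform (s : Set (ℝ × ℝ)) : BddBelow ((fun p : ℝ × ℝ => qform p.1 p.2) '' s) :=
  ⟨0, by rintro _ ⟨p, -, rfl⟩; exact (qform_pos p.1 p.2).le⟩

lemma eta_le_qform {W x : ℝ} (hx : |x| ≤ W + 1) (φ : ℝ) : eta W ≤ qform x φ := by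
  obtain ⟨ψ, ⟨hψ₀, hψπ⟩, hψ⟩ := (qform_periodic x).exists_mem_Ico₀ pi_pos φ
  rw [hψ]
  exact csInf_le (bddBelow_image_qform _) ⟨(x, ψ), ⟨abs_le.mp hx, hψ₀, hψπ.le⟩, rfl⟩

lemma eta_pos {W : ℝ} (hW : 0 ≤ W + 1) : 0 < eta W := by
  have hne : (Set.Icc (-(W + 1)) (W + 1) ×ˢ Set.Icc 0 π).Nonempty :=
    ⟨(0, 0), ⟨by linarith, hW⟩, le_rfl, pi_pos.le⟩
  have hcont : Continuous fun p : ℝ × ℝ => qform p.1 p.2 := by unfold qform; fun_prop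
  obtain ⟨p, -, hp⟩ := ((isCompact_Icc.prod isCompact_Icc).image hcont).sInf_mem (hne.image _)
  rw [eta, ← hp]
  exact qform_pos p.1 p.2

lemma div_qform_le_one_add_div_eta {W t a : ℝ} (ht : |t| ≤ W + 1) (ha : 0 ≤ a) (φ : ℝ) :
    (a + sin φ ^ 2) / qform t φ ≤ 1 + a / eta W := by
  have hq := qform_pos t φ
  have hη := eta_pos (W := W) ((abs_nonneg t).trans ht)
  rw [add_div, add_comm]
  gcongr
  · exact (div_le_one hq).mpr (sin_sq_le_qform t φ)
  · exact eta_le_qform ht φ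

lemma pruferStep_add_int_mul_pi (e E u : ℝ) (k : ℤ) :
    pruferStep e E (u + k * π) = pruferStep e E u + k * π := by
  have hsin : sin (u + k * π) = 0 ↔ sin u = 0 := by
    simp [sin_add_int_mul_pi, zpow_ne_zero]
  have hcot : cos (u + k * π) / sin (u + k * π) = cos u / sin u := by
    rw [← inv_div, ← tan_eq_sin_div_cos, tan_add_int_mul_pi, tan_eq_sin_div_cos, inv_div]
  have hfloor : ⌊(u + k * π) / π⌋ = ⌊u / π⌋ + k := by
    rw [add_div, mul_div_cancel_right₀ _ pi_ne_zero, Int.floor_add_intCast]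
  unfold pruferStep
  split_ifs <;> simp_all <;> ring

noncomputable def pruferVec (t u : ℝ) : ℂ := ⟨cos u - t * sin u, sin u⟩

lemma normSq_pruferVec (t u : ℝ) : normSq (pruferVec t u) = qform t u := by
  rw [pruferVec, Complex.normSq_mk, qform_eq]; ring

lemma pruferVec_mem_slitPlane (t : ℝ) {u : ℝ} (hu : |u| < π) : pruferVec t u ∈ slitPlane := by
  rw [Complex.mem_slitPlane_iff]
  by_cases hs : sin u = 0
  · have hu0 : u = 0 := (sin_eq_zero_iff_of_lt_of_lt (abs_lt.mp hu).1 (abs_lt.mp hu).2).mp hs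
    simp [pruferVec, hu0]
  · exact Or.inr hs

lemma pruferVec_eq_sin_mul {t u : ℝ} (hs : sin u ≠ 0) :
    pruferVec t u = sin u * (-(t - cos u / sin u : ℝ) + I) := by
  have hre : cos u - t * sin u = sin u * -(t - cos u / sin u) := by field_simp; ring
  generalize t - cos u / sin u = x at hre ⊢
  apply Complex.ext <;> simp [pruferVec, hre, Complex.sin_ofReal_re]

lemma pruferStep_eq_arg_sub (e E : ℝ) {u : ℝ} (hu : |u| < π) :
    pruferStep e E u = arg (pruferVec (E - e) u) - π / 2 := by
  obtain ⟨hu₁, hu₂⟩ := abs_lt.mp hu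
  rcases lt_trichotomy u 0 with hneg | rfl | hpos
  · have hs : sin u < 0 := sin_neg_of_neg_of_neg_pi_lt hneg hu₁
    have hfloor : ⌊u / π⌋ = -1 := by
      rw [Int.floor_eq_iff]; constructor
      · rw [le_div_iff₀ pi_pos]; push_cast; linarith
      · rw [div_lt_iff₀ pi_pos]; push_cast; linarith
    rw [pruferStep, if_neg hs.ne, hfloor, pruferVec_eq_sin_mul hs.ne]
    generalize E - e - cos u / sin u = x
    rw [show (sin u : ℂ) * (-x + I) = (-sin u : ℝ) * -(-x + I) by push_cast; ring,
      Complex.arg_real_mul _ (neg_pos.mpr hs), Complex.arg_neg_eq_arg_sub_pi_of_im_pos (by simp),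
      arg_neg_add_I]
    push_cast; ring
  · have h1 : pruferVec (E - e) 0 = 1 := by apply Complex.ext <;> simp [pruferVec]
    simp [pruferStep, h1]
  · have hs : 0 < sin u := sin_pos_of_pos_of_lt_pi hpos hu₂
    have hfloor : ⌊u / π⌋ = 0 := by
      rw [Int.floor_eq_iff]; constructor
      · push_cast; positivity
      · rw [div_lt_iff₀ pi_pos]; push_cast; linarith
    rw [pruferStep, if_neg hs.ne', hfloor, pruferVec_eq_sin_mul hs.ne', Complex.arg_real_mul _ hs,
      arg_neg_add_I]
    push_cast; ring

lemma hasDerivAt_pruferVec (e : ℝ) {g : ℝ → ℝ} {a E₀ : ℝ} (hg : HasDerivAt g a E₀) :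
    HasDerivAt (fun E => pruferVec (E - e) (g E))
      ⟨-sin (g E₀) * a - (sin (g E₀) + (E₀ - e) * (cos (g E₀) * a)), cos (g E₀) * a⟩ E₀ := by
  have hsin := (hasDerivAt_sin (g E₀)).comp E₀ hg
  have hre := ((hasDerivAt_cos (g E₀)).comp E₀ hg).sub (((hasDerivAt_id E₀).sub_const e).mul hsin)
  have hvec : (fun E => pruferVec (E - e) (g E))
      = fun E => ((cos (g E) - (E - e) * sin (g E) : ℝ) : ℂ) + (sin (g E) : ℝ) * I := by
    funext E; apply Complex.ext <;> simp [pruferVec, Complex.sin_ofReal_re, Complex.cos_ofReal_re]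
  rw [hvec]
  refine (hre.ofReal_comp.add (hsin.ofReal_comp.mul_const I)).congr_deriv ?_
  apply Complex.ext <;> simp [Complex.sin_ofReal_re, Complex.cos_ofReal_re]

lemma hasDerivAt_arg_pruferVec (e : ℝ) {g : ℝ → ℝ} {a E₀ : ℝ} (hg : HasDerivAt g a E₀)
    (hgE₀ : |g E₀| < π) :
    HasDerivAt (fun E => arg (pruferVec (E - e) (g E)))
      ((a + sin (g E₀) ^ 2) / qform (E₀ - e) (g E₀)) E₀ := by
  convert (hasDerivAt_pruferVec e hg).arg (pruferVec_mem_slitPlane _ hgE₀) using 1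
  rw [Complex.div_im, normSq_pruferVec]
  have hq := (qform_pos (E₀ - e) (g E₀)).ne'
  simp only [pruferVec]
  field_simp
  linear_combination -a * sin_sq_add_cos_sq (g E₀)

lemma hasDerivAt_pruferStep_comp (e : ℝ) {f : ℝ → ℝ} {a E₀ : ℝ} (hf : HasDerivAt f a E₀) :
    HasDerivAt (fun E => pruferStep e E (f E))
      ((a + sin (f E₀) ^ 2) / qform (E₀ - e) (f E₀)) E₀ := by
  obtain ⟨k, hk₀, hkπ⟩ : ∃ k : ℤ, f E₀ - k * π ∈ Set.Ico 0 π :=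
    ⟨toIcoDiv pi_pos 0 (f E₀), by
      simpa only [zsmul_eq_mul, zero_add] using sub_toIcoDiv_zsmul_mem_Ico pi_pos 0 (f E₀)⟩
  have hball : Metric.ball (k * π) π ∈ 𝓝 (f E₀) := by
    refine Metric.isOpen_ball.mem_nhds ?_
    rw [Metric.mem_ball, Real.dist_eq, abs_lt]
    constructor <;> linarith
  have hloc : (fun E => pruferStep e E (f E))
      =ᶠ[𝓝 E₀] fun E => arg (pruferVec (E - e) (f E - k * π)) - π / 2 + k * π := by
    filter_upwards [hf.continuousAt hball] with E hE
    rw [← pruferStep_eq_arg_sub e E (by rwa [← Real.dist_eq]), ← pruferStep_add_int_mul_pi,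
      sub_add_cancel]
  have hderiv := ((hasDerivAt_arg_pruferVec e (hf.sub_const (k * π))
    (abs_lt.mpr ⟨by linarith [pi_pos], hkπ⟩)).sub_const (π / 2)).add_const (k * π)
  rw [sin_sq_periodic.sub_int_mul_eq, (qform_periodic _).sub_int_mul_eq] at hderiv
  exact hderiv.congr_of_eventuallyEq hloc

lemma prufer_succ (ε : ℕ → ℝ) (E : ℝ) {n : ℕ} (hn : 1 ≤ n) :
    prufer ε E (n + 1) = pruferStep (ε n) E (prufer ε E n) := by
  obtain ⟨m, rfl⟩ := Nat.exists_eq_add_of_le' hn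
  rfl

lemma exists_nonneg_hasDerivAt_prufer (ε : ℕ → ℝ) {n : ℕ} (hn : 1 ≤ n) (E : ℝ) :
    ∃ a, 0 ≤ a ∧ HasDerivAt (fun E' => prufer ε E' n) a E := by
  induction n, hn using Nat.le_induction with
  | base => exact ⟨0, le_rfl, hasDerivAt_const E (π / 2)⟩
  | succ n hn ih =>
    obtain ⟨a, ha, hφ⟩ := ih
    simp only [prufer_succ ε _ hn]
    exact ⟨_, by have := qform_pos (E - ε n) (prufer ε E n); positivity,
      hasDerivAt_pruferStep_comp (ε n) hφ⟩

theorem prufer_deriv_recursive_bound_general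
    (N : ℕ) (W : ℝ) (ε : ℕ → ℝ) :
    ∀ n : ℕ, 1 ≤ n → n ≤ N → ∀ E : ℝ, |E - ε n| ≤ W + 1 →
      deriv (fun E' : ℝ => prufer ε E' (n + 1)) E
        ≤ 1 + deriv (fun E' : ℝ => prufer ε E' n) E / eta W := by
  intro n hn _ E hE
  obtain ⟨a, ha, hφ⟩ := exists_nonneg_hasDerivAt_prufer ε hn E
  simp only [prufer_succ ε _ hn]
  rw [(hasDerivAt_pruferStep_comp (ε n) hφ).deriv, hφ.deriv]
  exact div_qform_le_one_add_div_eta hE ha _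

/-- **Bounded rotation speed**: for every `1 ≤ n ≤ N` and every `E` with
`|E − ε_n| ≤ W + 1`, the Prüfer angle derivatives satisfy
`φ'_{n+1}(E) ≤ 1 + φ'_n(E)/η(W)`. -/
theorem prufer_deriv_recursive_bound
    (N : ℕ) (hN : 1 ≤ N) (W : ℝ) (hW : 0 ≤ W)
    (ε : ℕ → ℝ) (hε : ∀ n, 1 ≤ n → n ≤ N → ε n ∈ Set.Icc 0 W) :
    ∀ n : ℕ, 1 ≤ n → n ≤ N → ∀ E : ℝ, |E - ε n| ≤ W + 1 →
      deriv (fun E' : ℝ => prufer ε E' (n + 1)) E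
        ≤ 1 + deriv (fun E' : ℝ => prufer ε E' n) E / eta W :=
  prufer_deriv_recursive_bound_general N W ε
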